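/- arXiv:2409.06058 — 5 statements merged into one kernel-verified Lean document; each statement's English description precedes it below -/
import Mathlib

section
/- Let (a_n)_{n∈ℤ} be complex numbers with Σ_{n∈ℤ}|a_n| < ∞, and define f(x,t) = Σ_{n∈ℤ} a_n e(nx − n²t) and g(x) = f(x,0). Then for every irreducible fraction a/q (a an integer, q a positive integer, gcd(a,q)=1) and every real x, f(x, a/q) = (1/q)·Σ_{k=0}^{q−1} conj(G(a,k,q))·g(x + k/q). -/
noncomputable def e (x : ℝ) : ℂ := Complex.exp (2 * Real.pi * Complex.I * x)

noncomputable def G (a k : ℤ) (q : ℕ) : ℂ :=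
  ∑ ℓ ∈ Finset.range q, e (((a * ℓ ^ 2 + k * ℓ : ℤ) : ℝ) / q)

noncomputable def f (a : ℤ → ℂ) (x t : ℝ) : ℂ :=
  ∑' n : ℤ, a n * e (n * x - n ^ 2 * t)

/-!
Expanding the conjugated Gauss sums and using orthogonality of the characters `k ↦ e (m k / q)`,
`∑ₖ conj (G a k q) e (n k / q) = q e (-a n² / q)`: only the `ℓ ≡ n (mod q)` term of `G` survives,
and `e (-a ℓ² / q)` depends only on `ℓ` mod `q`. Hence each term `a_n e (n x - n² a / q)` of
`f (x, a / q)` is the corresponding average of the terms `a_n e (n (x + k / q))`, and absolute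
summability lets the finite sum over `k` pass through the series.
-/

open Finset

lemma e_add (x y : ℝ) : e (x + y) = e x * e y := by
  rw [e, e, e, ← Complex.exp_add]
  push_cast
  ring_nf

lemma norm_e (x : ℝ) : ‖e x‖ = 1 := by
  rw [e, Complex.norm_exp]
  simp

lemma conj_e (x : ℝ) : starRingEnd ℂ (e x) = e (-x) := by
  rw [e, e, ← Complex.exp_conj]
  simp only [map_mul, Complex.conj_I, Complex.conj_ofReal, map_ofNat]
  push_cast
  ring_nf

lemma e_eq_one_iff (x : ℝ) : e x = 1 ↔ ∃ m : ℤ, x = m := by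
  rw [e, Complex.exp_eq_one_iff]
  refine exists_congr fun m => ⟨fun h => ?_, fun h => by rw [h]; push_cast; ring⟩
  have hπ : (2 * Real.pi * Complex.I : ℂ) ≠ 0 := by simp [Real.pi_ne_zero]
  exact_mod_cast mul_left_cancel₀ hπ (h.trans (mul_comm _ _))

lemma e_intCast (m : ℤ) : e m = 1 :=
  (e_eq_one_iff m).2 ⟨m, rfl⟩

lemma e_intCast_div_eq_one_iff {q : ℕ} (hq : q ≠ 0) (m : ℤ) :
    e (m / q) = 1 ↔ (q : ℤ) ∣ m := by
  rw [e_eq_one_iff]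
  refine ⟨fun ⟨c, hc⟩ => ⟨c, ?_⟩, fun ⟨c, hc⟩ => ⟨c, ?_⟩⟩
  · rw [div_eq_iff (by positivity)] at hc
    exact_mod_cast hc.trans (mul_comm _ _)
  · rw [hc]
    push_cast
    field_simp

lemma e_intCast_div_congr {q : ℕ} (hq : q ≠ 0) {m₁ m₂ : ℤ} (h : (q : ℤ) ∣ m₁ - m₂) :
    e (m₁ / q) = e (m₂ / q) := by
  have hsplit : (m₁ : ℝ) / q = ((m₁ - m₂ : ℤ) : ℝ) / q + m₂ / q := by
    push_cast
    ring
  rw [hsplit, e_add, (e_intCast_div_eq_one_iff hq _).2 h, one_mul]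

lemma sum_range_e_mul_div {q : ℕ} (hq : q ≠ 0) (m : ℤ) :
    ∑ k ∈ range q, e (m * k / q) = if (q : ℤ) ∣ m then (q : ℂ) else 0 := by
  have hpow : ∀ k : ℕ, e (m * k / q) = e (m / q) ^ k := by
    intro k
    rw [e, e, ← Complex.exp_nat_mul]
    push_cast
    ring_nf
  simp only [hpow]
  split_ifs with h
  · simp [(e_intCast_div_eq_one_iff hq m).2 h]
  · rw [geom_sum_eq (mt (e_intCast_div_eq_one_iff hq m).1 h), ← hpow, mul_div_cancel_right₀,
      e_intCast, sub_self, zero_div]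
    exact_mod_cast hq

lemma card_filter_range_dvd_sub {q : ℕ} (hq : q ≠ 0) (n : ℤ) :
    #((range q).filter fun ℓ : ℕ => (q : ℤ) ∣ n - ℓ) = 1 := by
  have : NeZero q := ⟨hq⟩
  rw [card_eq_one]
  refine ⟨(n : ZMod q).val, eq_singleton_iff_unique_mem.2 ⟨?_, fun ℓ hℓ => ?_⟩⟩
  · rw [mem_filter, mem_range, ← ZMod.intCast_eq_intCast_iff_dvd_sub]
    exact ⟨ZMod.val_lt _, by simp⟩
  · rw [mem_filter, mem_range, ← ZMod.intCast_eq_intCast_iff_dvd_sub] at hℓ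
    rw [← ZMod.val_natCast_of_lt hℓ.1, ← hℓ.2]
    simp

lemma sum_conj_G_mul_e {q : ℕ} (hq : q ≠ 0) (A n : ℤ) :
    ∑ k ∈ range q, starRingEnd ℂ (G A k q) * e (n * k / q) = q * e (-(A * n ^ 2) / q) := by
  have hexpand : ∀ k : ℕ, starRingEnd ℂ (G A k q) * e (n * k / q) =
      ∑ ℓ ∈ range q, e (((-(A * ℓ ^ 2) : ℤ) : ℝ) / q) * e (((n - ℓ : ℤ) : ℝ) * k / q) := by
    intro k
    rw [G, map_sum, sum_mul]
    refine sum_congr rfl fun ℓ _ => ?_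
    rw [conj_e, ← e_add, ← e_add]
    congr 1
    push_cast
    ring
  have hcollapse : ∀ ℓ : ℕ, e (((-(A * ℓ ^ 2) : ℤ) : ℝ) / q) *
      ∑ k ∈ range q, e (((n - ℓ : ℤ) : ℝ) * k / q) =
      if (q : ℤ) ∣ n - ℓ then q * e (((-(A * n ^ 2) : ℤ) : ℝ) / q) else 0 := by
    intro ℓ
    rw [sum_range_e_mul_div hq]
    split_ifs with h
    · have hsq : (q : ℤ) ∣ -(A * ℓ ^ 2) - -(A * n ^ 2) := by
        rw [show -(A * ℓ ^ 2) - -(A * n ^ 2) = A * (n + ℓ) * (n - ℓ) by ring]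
        exact h.mul_left _
      rw [e_intCast_div_congr hq hsq, mul_comm]
    · rw [mul_zero]
  calc ∑ k ∈ range q, starRingEnd ℂ (G A k q) * e (n * k / q)
      = ∑ ℓ ∈ range q, e (((-(A * ℓ ^ 2) : ℤ) : ℝ) / q) *
          ∑ k ∈ range q, e (((n - ℓ : ℤ) : ℝ) * k / q) := by
        simp_rw [hexpand, mul_sum]
        exact sum_comm
    _ = q * e (-(A * n ^ 2) / q) := by
        rw [sum_congr rfl fun ℓ _ => hcollapse ℓ, sum_ite, sum_const_zero, add_zero, sum_const,
          card_filter_range_dvd_sub hq, one_smul]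
        push_cast
        rfl

lemma e_sub_sq_mul_div (x : ℝ) {q : ℕ} (hq : q ≠ 0) (A n : ℤ) :
    e (n * x - n ^ 2 * (A / q)) =
      1 / q * ∑ k ∈ range q, starRingEnd ℂ (G A k q) * e (n * (x + k / q)) := by
  have hshift : ∀ k : ℕ, e (n * (x + k / q)) = e (n * x) * e (n * k / q) := fun k => by
    rw [← e_add]
    ring_nf
  simp_rw [hshift, mul_left_comm _ (e (n * x)), ← mul_sum, sum_conj_G_mul_e hq]
  rw [sub_eq_add_neg, e_add]
  field_simp

lemma summable_mul_e {a : ℤ → ℂ} (ha : Summable fun n => ‖a n‖) (φ : ℤ → ℝ) :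
    Summable fun n => a n * e (φ n) :=
  .of_norm (by simpa only [norm_mul, norm_e, mul_one] using ha)

theorem stmt0_general (a : ℤ → ℂ) (ha : Summable fun n : ℤ => ‖a n‖)
    (A : ℤ) (q : ℕ) (hq : 0 < q) (x : ℝ) :
    f a x ((A : ℝ) / q) =
      (1 / q) * ∑ k ∈ Finset.range q,
        (starRingEnd ℂ) (G A k q) * f a (x + (k : ℝ) / q) 0 := by
  simp_rw [f, e_sub_sq_mul_div x hq.ne', mul_zero, sub_zero, ← tsum_mul_left]
  rw [← Summable.tsum_finsetSum fun k _ => (summable_mul_e ha _).mul_left _, ← tsum_mul_left]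
  refine tsum_congr fun n => ?_
  simp_rw [mul_sum]
  exact sum_congr rfl fun k _ => by ring

theorem stmt0 (a : ℤ → ℂ) (ha : Summable fun n : ℤ => ‖a n‖)
    (A : ℤ) (q : ℕ) (hq : 0 < q) (hcop : Int.gcd A q = 1) (x : ℝ) :
    f a x ((A : ℝ) / q) =
      (1 / q) * ∑ k ∈ Finset.range q,
        (starRingEnd ℂ) (G A k q) * f a (x + (k : ℝ) / q) 0 :=
  stmt0_general a ha A q hq x
end

section
/- Let P(x,y) be a polynomial in two variables with rational coefficients, let n₁, n₂ be positive integers, and set ζ₁ = e(1/n₁), ζ₂ = e(1/n₂). If P(ζ₁, ζ₂) = 0, then P(ζ₁^{m₁}, ζ₂^{m₂}) = 0 for all integers m₁, m₂ with 0 < m₁ ≤ n₁, 0 < m₂ ≤ n₂, gcd(m₁, n₁) = gcd(m₂, n₂) = 1, and gcd(n₁, n₂) dividing m₁ − m₂. -/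
open Polynomial

theorem Nat.exists_coprime_lcm_modEq {n₁ n₂ m₁ m₂ : ℕ} (hc₁ : m₁.Coprime n₁) (hc₂ : m₂.Coprime n₂)
    (h : m₁ ≡ m₂ [MOD n₁.gcd n₂]) :
    ∃ k, k.Coprime (n₁.lcm n₂) ∧ k ≡ m₁ [MOD n₁] ∧ k ≡ m₂ [MOD n₂] := by
  obtain ⟨k, hk₁, hk₂⟩ := Nat.chineseRemainder' h
  have hkn₁ : k.Coprime n₁ := hk₁.gcd_eq.trans hc₁
  have hkn₂ : k.Coprime n₂ := hk₂.gcd_eq.trans hc₂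
  exact ⟨k, (hkn₁.mul_right hkn₂).coprime_dvd_right (Nat.lcm_dvd_mul _ _), hk₁, hk₂⟩

theorem IsPrimitiveRoot.pow_eq_pow_of_modEq {M : Type*} [CommMonoid M] {ζ : M} {n m k : ℕ}
    (hζ : IsPrimitiveRoot ζ n) (hmk : m ≡ k [MOD n]) : ζ ^ m = ζ ^ k := by
  rw [← pow_mod_orderOf, ← pow_mod_orderOf ζ k, ← hζ.eq_orderOf, hmk]

theorem e_pow (x : ℝ) (n : ℕ) : e x ^ n = e (n * x) := by
  simp only [e, ← Complex.exp_nat_mul]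
  push_cast
  ring_nf

theorem isPrimitiveRoot_e_one_div {n : ℕ} (hn : 0 < n) : IsPrimitiveRoot (e (1 / n)) n := by
  convert Complex.isPrimitiveRoot_exp n hn.ne' using 2
  simp only [e]
  push_cast
  rw [mul_one_div]

theorem e_one_div_eq_pow_of_dvd {n N : ℕ} (hN : N ≠ 0) (hnN : n ∣ N) :
    e (1 / n) = e (1 / N) ^ (N / n) := by
  have hn : (n : ℝ) ≠ 0 := by exact_mod_cast ne_zero_of_dvd_ne_zero hN hnN
  rw [e_pow, Nat.cast_div hnN hn]
  congr 1
  field_simp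

theorem e_one_div_pow_eq_pow_pow {n N m k : ℕ} (hN : N ≠ 0) (hnN : n ∣ N) (hkm : k ≡ m [MOD n]) :
    e (1 / n) ^ m = (e (1 / N) ^ k) ^ (N / n) := by
  have hn : 0 < n := Nat.pos_of_ne_zero (ne_zero_of_dvd_ne_zero hN hnN)
  rw [← pow_mul, mul_comm, pow_mul, ← e_one_div_eq_pow_of_dvd hN hnN]
  exact (isPrimitiveRoot_e_one_div hn).pow_eq_pow_of_modEq hkm.symm

namespace IsPrimitiveRoot

variable {K : Type*} [Field K] [CharZero K] {ζ : K} {N : ℕ}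

theorem aeval_pow_eq_zero_of_coprime (hζ : IsPrimitiveRoot ζ N) (hN : 0 < N) {k : ℕ}
    (hk : k.Coprime N) {Q : ℚ[X]} (hQ : aeval ζ Q = 0) : aeval (ζ ^ k) Q = 0 := by
  have hminpoly : minpoly ℚ ζ = minpoly ℚ (ζ ^ k) := by
    rw [← cyclotomic_eq_minpoly_rat hζ hN, cyclotomic_eq_minpoly_rat (hζ.pow_of_coprime k hk) hN]
  rw [← minpoly.dvd_iff, ← hminpoly]
  exact minpoly.dvd_iff.2 hQ

theorem mvPolynomial_aeval_pow_eq_zero_of_coprime {σ : Type*} (hζ : IsPrimitiveRoot ζ N)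
    (hN : 0 < N) {k : ℕ} (hk : k.Coprime N) (a : σ → ℕ) {P : MvPolynomial σ ℚ}
    (hP : MvPolynomial.aeval (fun i ↦ ζ ^ a i) P = 0) :
    MvPolynomial.aeval (fun i ↦ (ζ ^ k) ^ a i) P = 0 := by
  have hcomp (x : K) : MvPolynomial.aeval (fun i ↦ x ^ a i) P =
      aeval x (MvPolynomial.aeval (fun i ↦ (X : ℚ[X]) ^ a i) P) := by
    rw [MvPolynomial.comp_aeval_apply]
    simp only [map_pow, aeval_X]
  rw [hcomp] at hP ⊢
  exact hζ.aeval_pow_eq_zero_of_coprime hN hk hP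

end IsPrimitiveRoot

theorem stmt10_general (P : MvPolynomial (Fin 2) ℚ) (n₁ n₂ : ℕ) (h₁ : 0 < n₁) (h₂ : 0 < n₂)
    (hP : MvPolynomial.aeval ![e (1 / (n₁ : ℝ)), e (1 / (n₂ : ℝ))] P = 0)
    (m₁ m₂ : ℕ)
    (hc₁ : Nat.gcd m₁ n₁ = 1) (hc₂ : Nat.gcd m₂ n₂ = 1)
    (hd : (Nat.gcd n₁ n₂ : ℤ) ∣ (m₁ : ℤ) - (m₂ : ℤ)) :
    MvPolynomial.aeval ![(e (1 / (n₁ : ℝ))) ^ m₁, (e (1 / (n₂ : ℝ))) ^ m₂] P = 0 := by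
  set N := n₁.lcm n₂
  have hN : 0 < N := Nat.lcm_pos h₁ h₂
  obtain ⟨k, hkN, hk₁, hk₂⟩ :=
    Nat.exists_coprime_lcm_modEq hc₁ hc₂ (Nat.modEq_iff_dvd.2 hd).symm
  have hroots : ![e (1 / (n₁ : ℝ)), e (1 / (n₂ : ℝ))] =
      fun i ↦ e (1 / N) ^ ![N / n₁, N / n₂] i := by
    ext i; fin_cases i
    exacts [e_one_div_eq_pow_of_dvd hN.ne' (Nat.dvd_lcm_left _ _),
      e_one_div_eq_pow_of_dvd hN.ne' (Nat.dvd_lcm_right _ _)]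
  have hconj : ![e (1 / (n₁ : ℝ)) ^ m₁, e (1 / (n₂ : ℝ)) ^ m₂] =
      fun i ↦ (e (1 / N) ^ k) ^ ![N / n₁, N / n₂] i := by
    ext i; fin_cases i
    exacts [e_one_div_pow_eq_pow_pow hN.ne' (Nat.dvd_lcm_left _ _) hk₁,
      e_one_div_pow_eq_pow_pow hN.ne' (Nat.dvd_lcm_right _ _) hk₂]
  rw [hroots] at hP
  rw [hconj]
  exact (isPrimitiveRoot_e_one_div hN).mvPolynomial_aeval_pow_eq_zero_of_coprime hN hkN _ hP

theorem stmt10 (P : MvPolynomial (Fin 2) ℚ) (n₁ n₂ : ℕ) (h₁ : 0 < n₁) (h₂ : 0 < n₂)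
    (hP : MvPolynomial.aeval ![e (1 / (n₁ : ℝ)), e (1 / (n₂ : ℝ))] P = 0)
    (m₁ m₂ : ℕ) (hm₁ : 0 < m₁) (hm₁' : m₁ ≤ n₁) (hm₂ : 0 < m₂) (hm₂' : m₂ ≤ n₂)
    (hc₁ : Nat.gcd m₁ n₁ = 1) (hc₂ : Nat.gcd m₂ n₂ = 1)
    (hd : (Nat.gcd n₁ n₂ : ℤ) ∣ (m₁ : ℤ) - (m₂ : ℤ)) :
    MvPolynomial.aeval ![(e (1 / (n₁ : ℝ))) ^ m₁, (e (1 / (n₂ : ℝ))) ^ m₂] P = 0 :=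
  stmt10_general P n₁ n₂ h₁ h₂ hP m₁ m₂ hc₁ hc₂ hd
end

section
/- Let P(x,y) be a polynomial in two variables with rational coefficients, let n₁, n₂ be positive integers with gcd(n₁, n₂) = 1, and set ζ₁ = e(1/n₁), ζ₂ = e(1/n₂). Assume P(ζ₁, ζ₂) = 0 and that the degree of P in the first variable is strictly less than φ(n₁) (Euler's totient, which is the degree of the n₁-th cyclotomic polynomial). Then for every integer e₂ with gcd(e₂, n₂) = 1, the one-variable polynomial P(x, ζ₂^{e₂}) is identically zero, i.e. P(z, ζ₂^{e₂}) = 0 for every complex number z. -/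
/-!
`S(X) = P(X ^ n₂, X ^ n₁)` is a polynomial over `ℚ` vanishing at a primitive `n₁ n₂`-th root of
unity `η` with `η ^ n₂ = ζ₁`, `η ^ n₁ = ζ₂`; since the cyclotomic polynomial is irreducible over
`ℚ`, it vanishes at every primitive `n₁ n₂`-th root. As `n₁` and `n₂` are coprime, every pair
`(w, c)` of primitive `n₁`-th and `n₂`-th roots is `(η ^ n₂, η ^ n₁)` for such an `η`, so
`P(w, ζ₂ ^ e₂) = 0` at all `φ(n₁)` primitive `n₁`-th roots `w`: more roots than the degree of
`P(x, ζ₂ ^ e₂)` in `x` allows, unless it vanishes identically.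
-/

lemma isPrimitiveRoot_e {n : ℕ} (hn : n ≠ 0) : IsPrimitiveRoot (e (1 / n)) n := by
  convert Complex.isPrimitiveRoot_exp n hn using 1
  unfold e
  push_cast
  rw [mul_one_div]

namespace IsPrimitiveRoot

variable {M : Type*} [CommMonoid M]

theorem exists_pow_pow_eq_self {w : M} {n k : ℕ} (hw : IsPrimitiveRoot w n) (hn : n ≠ 0)
    (hk : k.Coprime n) : ∃ a : ℕ, (w ^ k) ^ a = w := by
  obtain ⟨a, -, ha⟩ := Nat.exists_mul_mod_eq_of_coprime 1 hk hn
  refine ⟨a, ?_⟩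
  rw [← pow_mul, ← pow_mod_orderOf, ← hw.eq_orderOf, ha, hw.eq_orderOf, pow_mod_orderOf, pow_one]

theorem exists_pow_eq_and_pow_eq {n₁ n₂ : ℕ} (hn₁ : n₁ ≠ 0) (hn₂ : n₂ ≠ 0)
    (hcop : n₁.Coprime n₂) {w c : M} (hw : IsPrimitiveRoot w n₁) (hc : IsPrimitiveRoot c n₂) :
    ∃ η : M, IsPrimitiveRoot η (n₁ * n₂) ∧ η ^ n₂ = w ∧ η ^ n₁ = c := by
  obtain ⟨a, ha⟩ := hw.exists_pow_pow_eq_self hn₁ hcop.symm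
  obtain ⟨b, hb⟩ := hc.exists_pow_pow_eq_self hn₂ hcop
  have hη₂ : (w ^ a * c ^ b) ^ n₂ = w := by
    rw [mul_pow, ← pow_mul, ← pow_mul, mul_comm b, pow_mul c, hc.pow_eq_one, one_pow, mul_one,
      mul_comm, pow_mul, ha]
  have hη₁ : (w ^ a * c ^ b) ^ n₁ = c := by
    rw [mul_pow, ← pow_mul, ← pow_mul, mul_comm a, pow_mul w, hw.pow_eq_one, one_pow, one_mul,
      mul_comm, pow_mul, hb]
  refine ⟨w ^ a * c ^ b, ⟨?_, fun l hl => ?_⟩, hη₂, hη₁⟩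
  · rw [pow_mul, hη₁, hc.pow_eq_one]
  · refine hcop.mul_dvd_of_dvd_of_dvd (hw.dvd_of_pow_eq_one l ?_) (hc.dvd_of_pow_eq_one l ?_)
    · rw [← hη₂, pow_right_comm, hl, one_pow]
    · rw [← hη₁, pow_right_comm, hl, one_pow]

theorem aeval_eq_zero_of_aeval_eq_zero {K : Type*} [Field K] [CharZero K] {n : ℕ} (hn : 0 < n)
    {ζ η : K} (hζ : IsPrimitiveRoot ζ n) (hη : IsPrimitiveRoot η n)
    {S : Polynomial ℚ} (hS : Polynomial.aeval ζ S = 0) : Polynomial.aeval η S = 0 := by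
  obtain ⟨q, rfl⟩ := minpoly.dvd ℚ ζ hS
  rw [map_mul, ← Polynomial.cyclotomic_eq_minpoly_rat hζ hn,
    Polynomial.cyclotomic_eq_minpoly_rat hη hn, minpoly.aeval, zero_mul]

end IsPrimitiveRoot

namespace MvPolynomial

theorem aeval_cons_eq_zero_of_degreeOf_lt_card {R A : Type*} [CommRing R] [CommRing A]
    [IsDomain A] [Algebra R A] {n : ℕ} {P : MvPolynomial (Fin (n + 1)) R} {y : Fin n → A}
    {s : Finset A} (hs : ∀ w ∈ s, aeval (Fin.cons w y) P = 0) (hdeg : P.degreeOf 0 < s.card)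
    (z : A) : aeval (Fin.cons z y) P = 0 := by
  set Q := Polynomial.map (eval y) (finSuccEquiv A n (map (algebraMap R A) P))
  have hQ : ∀ w, Q.eval w = aeval (Fin.cons w y) P := fun w => by
    rw [← eval_eq_eval_mv_eval', eval_map, aeval_def]
  have hQdeg : Q.natDegree < s.card := by
    refine (Polynomial.natDegree_map_le.trans ?_).trans_lt hdeg
    rw [natDegree_finSuccEquiv, degreeOf_eq_sup, degreeOf_eq_sup]
    exact Finset.sup_mono (support_map_subset _ _)
  rw [← hQ, Q.eq_zero_of_natDegree_lt_card_of_eval_eq_zero' s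
    (fun w hw => (hQ w).trans (hs w hw)) hQdeg, Polynomial.eval_zero]

theorem aeval_eq_zero_of_isPrimitiveRoot {K : Type*} [Field K] [CharZero K]
    {n₁ n₂ : ℕ} (hn₁ : 0 < n₁) (hn₂ : 0 < n₂) (hcop : n₁.Coprime n₂)
    {P : MvPolynomial (Fin 2) ℚ} {ζ₁ ζ₂ w c : K} (hζ₁ : IsPrimitiveRoot ζ₁ n₁)
    (hζ₂ : IsPrimitiveRoot ζ₂ n₂) (hP : aeval ![ζ₁, ζ₂] P = 0) (hw : IsPrimitiveRoot w n₁)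
    (hc : IsPrimitiveRoot c n₂) : aeval ![w, c] P = 0 := by
  set S : Polynomial ℚ := aeval ![Polynomial.X ^ n₂, Polynomial.X ^ n₁] P
  have hS : ∀ u : K, Polynomial.aeval u S = aeval ![u ^ n₂, u ^ n₁] P := fun u => by
    rw [comp_aeval_apply]
    congr 1
    ext i
    fin_cases i <;> simp
  obtain ⟨ζ, hζ, hζn₂, hζn₁⟩ := hζ₁.exists_pow_eq_and_pow_eq hn₁.ne' hn₂.ne' hcop hζ₂
  obtain ⟨η, hη, hηn₂, hηn₁⟩ := hw.exists_pow_eq_and_pow_eq hn₁.ne' hn₂.ne' hcop hc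
  have hSζ : Polynomial.aeval ζ S = 0 := by rw [hS, hζn₂, hζn₁, hP]
  rw [← hηn₂, ← hηn₁, ← hS]
  exact hζ.aeval_eq_zero_of_aeval_eq_zero (Nat.mul_pos hn₁ hn₂) hη hSζ

end MvPolynomial

theorem stmt11 (P : MvPolynomial (Fin 2) ℚ) (n₁ n₂ : ℕ) (h₁ : 0 < n₁) (h₂ : 0 < n₂)
    (hcop : Nat.gcd n₁ n₂ = 1)
    (hP : MvPolynomial.aeval ![e (1 / (n₁ : ℝ)), e (1 / (n₂ : ℝ))] P = 0)
    (hdeg : MvPolynomial.degreeOf 0 P < Nat.totient n₁)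
    (e₂ : ℤ) (he₂ : Int.gcd e₂ n₂ = 1) (z : ℂ) :
    MvPolynomial.aeval ![z, (e (1 / (n₂ : ℝ))) ^ e₂] P = 0 := by
  have hζ₂ := isPrimitiveRoot_e h₂.ne'
  have hroots : ∀ w ∈ primitiveRoots n₁ ℂ, MvPolynomial.aeval ![w, e (1 / n₂) ^ e₂] P = 0 :=
    fun w hw => MvPolynomial.aeval_eq_zero_of_isPrimitiveRoot h₁ h₂ hcop
      (isPrimitiveRoot_e h₁.ne') hζ₂ hP ((mem_primitiveRoots h₁).mp hw)
      (hζ₂.zpow_of_gcd_eq_one e₂ he₂)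
  exact MvPolynomial.aeval_cons_eq_zero_of_degreeOf_lt_card hroots
    (by rwa [Complex.card_primitiveRoots]) z
end

section
/- Let p be an odd prime, let u and t be positive integers with p not dividing t, let b, α, r be integers with gcd(b, p) = 1 and gcd(r, pt) = 1, and let K be an integer with 0 ≤ K < p. Then Σ_{k=0}^{K} e((bk² + αk)/p + rk/(p^{u+1}t)) ≠ 0. -/
open Complex Polynomial Finset

lemma zpow_eq_pow_toNat_emod {G₀ : Type*} [GroupWithZero G₀] {x : G₀} {n : ℕ} (hn : n ≠ 0)
    (hx : x ^ n = 1) (m : ℤ) : x ^ m = x ^ (m % n).toNat := by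
  have hx0 : x ≠ 0 := by rintro rfl; simp [zero_pow hn] at hx
  rw [← zpow_natCast, Int.toNat_of_nonneg (Int.emod_nonneg m (mod_cast hn))]
  conv_lhs => rw [← Int.emod_add_mul_ediv m n, zpow_add₀ hx0, zpow_mul, zpow_natCast, hx,
    one_zpow, mul_one]

namespace IsPrimitiveRoot

variable {K : Type*} [Field K]

theorem geom_sum_zpow {ω : K} {p : ℕ} (hω : IsPrimitiveRoot ω p) (a : ℤ) :
    ∑ j ∈ range p, (ω ^ a) ^ j = if (p : ℤ) ∣ a then (p : K) else 0 := by
  split_ifs with hpa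
  · simp [(hω.zpow_eq_one_iff_dvd a).mpr hpa]
  · have hωa : (ω ^ a) ^ p = 1 := by
      rw [← zpow_natCast, ← zpow_mul, mul_comm, zpow_mul, zpow_natCast, hω.pow_eq_one, one_zpow]
    rw [geom_sum_eq (mt (hω.zpow_eq_one_iff_dvd a).mp hpa), hωa, sub_self, zero_div]

variable [CharZero K]

-- `cyclotomic N ℚ` is the minimal polynomial of every primitive `N`-th root of unity.
theorem sum_zpow_eq_zero_of_isPrimitiveRoot {N : ℕ} (hN : 0 < N) {ζ η : K}
    (hζ : IsPrimitiveRoot ζ N) (hη : IsPrimitiveRoot η N) {ι : Type*} (s : Finset ι)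
    (a : ι → ℤ) (h : ∑ i ∈ s, ζ ^ a i = 0) : ∑ i ∈ s, η ^ a i = 0 := by
  set P : ℚ[X] := ∑ i ∈ s, X ^ (a i % N).toNat
  have aeval_P : ∀ μ : K, IsPrimitiveRoot μ N → aeval μ P = ∑ i ∈ s, μ ^ a i := fun μ hμ => by
    simp [P, zpow_eq_pow_toNat_emod hN.ne' hμ.pow_eq_one]
  obtain ⟨Q, hQ⟩ : cyclotomic N ℚ ∣ P := by
    rw [cyclotomic_eq_minpoly_rat hζ hN]
    exact minpoly.dvd ℚ ζ (by rw [aeval_P ζ hζ, h])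
  have hη_root : aeval η (cyclotomic N ℚ) = 0 := by
    rw [aeval_def, eval₂_eq_eval_map, map_cyclotomic]
    exact hη.isRoot_cyclotomic hN
  rw [← aeval_P η hη, hQ, map_mul, hη_root, zero_mul]

theorem sum_filter_dvd_zpow_eq_zero {p M : ℕ} (hM : 0 < M) (hpM : p ∣ M) {ζ : K}
    (hζ : IsPrimitiveRoot ζ (p * M)) {ι : Type*} (s : Finset ι) (a : ι → ℤ)
    (h : ∑ i ∈ s, ζ ^ a i = 0) : ∑ i ∈ s with (p : ℤ) ∣ a i, ζ ^ a i = 0 := by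
  have hp : 0 < p := Nat.pos_of_dvd_of_pos hpM hM
  have hω : IsPrimitiveRoot (ζ ^ M) p := hζ.pow (by positivity) (mul_comm _ _)
  have hconj : ∀ j : ℕ, ∑ i ∈ s, ζ ^ a i * ((ζ ^ M) ^ a i) ^ j = 0 := by
    intro j
    have hcop : (1 + j * M).Coprime (p * M) := by
      have hcopM : (1 + j * M).Coprime M :=
        (Nat.coprime_add_mul_right_left 1 M j).mpr (Nat.coprime_one_left M)
      exact Nat.Coprime.mul_right (hcopM.coprime_dvd_right hpM) hcopM
    rw [← hζ.sum_zpow_eq_zero_of_isPrimitiveRoot (by positivity) (hζ.pow_of_coprime _ hcop) s a h]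
    refine sum_congr rfl fun i _ => ?_
    rw [pow_add, pow_one, mul_comm j, pow_mul, mul_zpow, ← zpow_natCast (ζ ^ M) j,
      ← zpow_natCast _ j, zpow_comm]
  have hp0 : (p : K) ≠ 0 := by exact_mod_cast hp.ne'
  have : (p : K) * ∑ i ∈ s with (p : ℤ) ∣ a i, ζ ^ a i = 0 := by
    calc (p : K) * ∑ i ∈ s with (p : ℤ) ∣ a i, ζ ^ a i
        = ∑ i ∈ s, ζ ^ a i * ∑ j ∈ range p, ((ζ ^ M) ^ a i) ^ j := by
          simp only [hω.geom_sum_zpow, mul_ite, mul_zero, sum_ite, sum_const_zero, add_zero,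
            sum_mul, mul_comm (p : K)]
      _ = ∑ j ∈ range p, ∑ i ∈ s, ζ ^ a i * ((ζ ^ M) ^ a i) ^ j := by
          simp only [mul_sum]; exact sum_comm
      _ = 0 := sum_eq_zero fun j _ => hconj j
  exact (mul_eq_zero.mp this).resolve_left hp0

end IsPrimitiveRoot

lemma e_intCast_div_add_intCast_div {p M : ℕ} (hp : p ≠ 0) (hM : M ≠ 0) (x y : ℤ) :
    e ((x : ℝ) / p + (y : ℝ) / (p * M)) = exp (2 * Real.pi * I / (p * M : ℕ)) ^ (M * x + y) := by
  rw [e, ← exp_int_mul]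
  congr 1
  push_cast
  field_simp

lemma filter_range_dvd_add_mul_eq_singleton_zero {p K : ℕ} (hp : p.Prime) (hK : K < p) {r : ℤ}
    (hr : ¬ (p : ℤ) ∣ r) {f : ℕ → ℤ} (hf : ∀ k, (p : ℤ) ∣ f k) :
    {k ∈ range (K + 1) | (p : ℤ) ∣ f k + r * k} = {0} := by
  ext k
  simp only [mem_filter, mem_range, mem_singleton]
  rw [Int.dvd_add_right (hf k), (Nat.prime_iff_prime_int.mp hp).dvd_mul, or_iff_right hr,
    Int.natCast_dvd_natCast]
  exact ⟨fun ⟨hk, hpk⟩ => Nat.eq_zero_of_dvd_of_lt hpk (by omega),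
    fun hk => ⟨by omega, hk ▸ dvd_zero p⟩⟩

theorem stmt17_general (p : ℕ) (hp : Nat.Prime p) (u t : ℕ) (hu : 0 < u)
    (ht : 0 < t) (b α r : ℤ)
    (hr : Int.gcd r ((p : ℤ) * t) = 1) (K : ℕ) (hK : K < p) :
    ∑ k ∈ Finset.range (K + 1),
      e (((b * k ^ 2 + α * k : ℤ) : ℝ) / p + ((r * k : ℤ) : ℝ) / ((p : ℝ) ^ (u + 1) * t)) ≠ 0 := by
  set M := p ^ u * t
  set a : ℕ → ℤ := fun k => M * (b * k ^ 2 + α * k) + r * k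
  have hM : 0 < M := Nat.mul_pos (pow_pos hp.pos u) ht
  set ζ := exp (2 * Real.pi * I / (p * M : ℕ))
  have hζ : IsPrimitiveRoot ζ (p * M) := isPrimitiveRoot_exp _ (Nat.mul_pos hp.pos hM).ne'
  have hpM : p ∣ M := (dvd_pow_self p hu.ne').mul_right t
  have hterm : ∀ k : ℕ, e (((b * k ^ 2 + α * k : ℤ) : ℝ) / p
      + ((r * k : ℤ) : ℝ) / ((p : ℝ) ^ (u + 1) * t)) = ζ ^ a k := fun k => by
    rw [← e_intCast_div_add_intCast_div hp.ne_zero hM.ne']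
    congr 3
    simp only [M]
    push_cast
    ring
  have hpr : ¬ (p : ℤ) ∣ r := fun h => hp.not_dvd_one <| Int.natCast_dvd_natCast.mp <| by
    simpa [hr] using Int.dvd_coe_gcd h (dvd_mul_right (p : ℤ) t)
  have hfilter : {k ∈ range (K + 1) | (p : ℤ) ∣ a k} = {0} :=
    filter_range_dvd_add_mul_eq_singleton_zero hp hK hpr
      fun k => dvd_mul_of_dvd_left (Int.natCast_dvd_natCast.mpr hpM) _
  intro h
  simp_rw [hterm] at h
  have := hζ.sum_filter_dvd_zpow_eq_zero hM hpM _ a h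
  simp [hfilter, a] at this

theorem stmt17 (p : ℕ) (hp : Nat.Prime p) (hodd : Odd p) (u t : ℕ) (hu : 0 < u)
    (ht : 0 < t) (hpt : ¬ p ∣ t) (b α r : ℤ) (hb : Int.gcd b p = 1)
    (hr : Int.gcd r ((p : ℤ) * t) = 1) (K : ℕ) (hK : K < p) :
    ∑ k ∈ Finset.range (K + 1),
      e (((b * k ^ 2 + α * k : ℤ) : ℝ) / p + ((r * k : ℤ) : ℝ) / ((p : ℝ) ^ (u + 1) * t)) ≠ 0 :=
  stmt17_general p hp u t hu ht b α r hr K hK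
end

section
/- Let q be an even squarefree positive integer (so q/2 is odd and squarefree), α an integer, and K an integer with 0 ≤ K < q. Then Σ_{k=0}^{K} e((k² + (4α+1)k)/q) ≠ 0. -/
/-!
Write `q = 2m`, so that `m` is odd and squarefree, and let `ζ = e(1/m)`. Since `k² + (4α+1)k`
is even, the `k`-th term is `ζ ^ g(k)` with `g(k) = (k² + (4α+1)k)/2`. As the cyclotomic
polynomial is irreducible over `ℚ`, a vanishing sum `∑ ζ ^ g(k)` would stay zero with `ζ`
replaced by any primitive `m`-th root of unity `z`. Take `t` a non-square modulo every prime
factor of `m`; completing the square, `8(g(k) - c) = (2k + 4α + 1)² - t` for a suitable `c`,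
so every `g(k) - c` is a unit mod `m`. Then `∑_z ∑_k z ^ (g(k) - c)` is `(K+1) μ(m) ≠ 0`,
each inner sum over `z` being the Ramanujan sum of a unit, but it is also
`∑_z z ^ (-c) ∑_k z ^ g(k) = 0`.
-/

open Finset Polynomial

theorem pow_val_add_of_pow_eq_one {M : Type*} [CommMonoid M] {z : M} {n : ℕ} [NeZero n]
    (h : z ^ n = 1) (a b : ZMod n) : z ^ (a + b).val = z ^ a.val * z ^ b.val := by
  rw [ZMod.val_add, ← pow_eq_pow_mod _ h, pow_add]

theorem pow_val_mul_of_pow_eq_one {M : Type*} [CommMonoid M] {z : M} {n : ℕ}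
    (h : z ^ n = 1) (a b : ZMod n) : z ^ (a * b).val = (z ^ a.val) ^ b.val := by
  rw [ZMod.val_mul, ← pow_eq_pow_mod _ h, pow_mul]

namespace IsPrimitiveRoot

section IsDomain

variable {R : Type*} [CommRing R] [IsDomain R] {ζ : R} {n : ℕ}

theorem sum_nthRootsFinset_one_eq_zero (hζ : IsPrimitiveRoot ζ n) (hn : 1 < n) :
    ∑ z ∈ nthRootsFinset n (1 : R), z = 0 := by
  classical
  have : NeZero n := ⟨by omega⟩
  have himage : nthRootsFinset n (1 : R) = (range n).image (ζ ^ ·) := by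
    ext z
    rw [Polynomial.mem_nthRootsFinset (by omega), mem_image]
    constructor
    · intro hz
      obtain ⟨i, hi, rfl⟩ := hζ.eq_pow_of_pow_eq_one hz
      exact ⟨i, mem_range.mpr hi, rfl⟩
    · rintro ⟨i, -, rfl⟩
      rw [← pow_mul, mul_comm, pow_mul, hζ.pow_eq_one, one_pow]
  rw [himage, sum_image fun i hi j hj h => hζ.pow_inj (mem_range.mp hi) (mem_range.mp hj) h]
  exact hζ.geom_sum_eq_zero hn

theorem sum_primitiveRoots_eq_moebius (hζ : IsPrimitiveRoot ζ n) (hn : n ≠ 0) :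
    ∑ z ∈ primitiveRoots n R, z = ArithmeticFunction.moebius n := by
  classical
  have hdivisors : ∀ d > 0, d ∈ {d | d ∣ n} →
      ∑ i ∈ d.divisors, ∑ z ∈ primitiveRoots i R, z = if d = 1 then 1 else 0 := by
    intro d hd hdn
    split_ifs with h1
    · simp [h1, primitiveRoots_one]
    rw [← sum_biUnion fun i _ j _ hij => disjoint hij,
      ← nthRoots_one_eq_biUnion_primitiveRoots]
    have := hζ.pow_of_dvd (Nat.div_ne_zero_iff_of_dvd hdn |>.mpr ⟨hn, hd.ne'⟩)
      (Nat.div_dvd_of_dvd hdn)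
    rw [Nat.div_div_self hdn hn] at this
    exact this.sum_nthRootsFinset_one_eq_zero (by omega)
  rw [← (ArithmeticFunction.sum_eq_iff_sum_mul_moebius_eq_on {d | d ∣ n}
    (fun _ _ => dvd_trans)).1 hdivisors n (Nat.pos_of_ne_zero hn) dvd_rfl,
    Nat.sum_divisorsAntidiagonal fun a b =>
      (ArithmeticFunction.moebius a : R) * if b = 1 then 1 else 0]
  simp only [mul_ite, mul_one, mul_zero]
  rw [sum_eq_single n (fun x hx hxn => if_neg fun h => hxn
      (Nat.eq_of_dvd_of_div_eq_one (Nat.dvd_of_mem_divisors hx) h))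
    (fun h => absurd (Nat.mem_divisors_self n hn) h), Nat.div_self (Nat.pos_of_ne_zero hn),
    if_pos rfl]

theorem sum_primitiveRoots_pow_val_of_isUnit [NeZero n] {u : ZMod n} (hu : IsUnit u) :
    ∑ z ∈ primitiveRoots n R, z ^ u.val = ∑ z ∈ primitiveRoots n R, z := by
  have hprim : ∀ z ∈ primitiveRoots n R, IsPrimitiveRoot z n :=
    fun z hz => (mem_primitiveRoots (NeZero.pos n)).mp hz
  have hpow : ∀ w : (ZMod n)ˣ, ∀ z ∈ primitiveRoots n R,
      z ^ (w : ZMod n).val ∈ primitiveRoots n R :=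
    fun w z hz => (mem_primitiveRoots (NeZero.pos n)).mpr <|
      (hprim z hz).pow_of_coprime _ (ZMod.val_coe_unit_coprime w)
  have hinv : ∀ v w : (ZMod n)ˣ, v * w = 1 → ∀ z ∈ primitiveRoots n R,
      (z ^ (v : ZMod n).val) ^ (w : ZMod n).val = z := by
    intro v w hvw z hz
    have hz1 := (hprim z hz).pow_eq_one
    rw [← pow_val_mul_of_pow_eq_one hz1, ← Units.val_mul, hvw, Units.val_one,
      ZMod.val_one_eq_one_mod, ← pow_eq_pow_mod _ hz1, pow_one]
  obtain ⟨v, rfl⟩ := hu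
  exact sum_nbij' _ _ (hpow v) (hpow v⁻¹) (hinv v v⁻¹ (mul_inv_cancel v))
    (hinv v⁻¹ v (inv_mul_cancel v)) fun _ _ => rfl

end IsDomain

section CharZero

variable {K : Type*} [Field K] [CharZero K] {ζ : K} {n : ℕ}

theorem sum_pow_eq_zero_of_sum_pow_eq_zero (hn : 0 < n) (hζ : IsPrimitiveRoot ζ n) {z : K}
    (hz : IsPrimitiveRoot z n) {ι : Type*} {s : Finset ι} {a : ι → ℕ}
    (h : ∑ i ∈ s, ζ ^ a i = 0) : ∑ i ∈ s, z ^ a i = 0 := by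
  have haeval (x : K) : aeval x (∑ i ∈ s, X ^ a i : ℚ[X]) = ∑ i ∈ s, x ^ a i := by simp
  have hdvd : cyclotomic n ℚ ∣ ∑ i ∈ s, X ^ a i := by
    rw [cyclotomic_eq_minpoly_rat hζ hn]
    exact minpoly.dvd ℚ ζ (by rw [haeval, h])
  rw [← haeval]
  exact aeval_eq_zero_of_dvd_aeval_eq_zero hdvd
    (by rw [cyclotomic_eq_minpoly_rat hz hn]; exact minpoly.aeval ℚ z)

theorem sum_pow_val_ne_zero [NeZero n] (hn : Squarefree n) (hζ : IsPrimitiveRoot ζ n)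
    {ι : Type*} {s : Finset ι} (hs : s.Nonempty) {a : ι → ZMod n} {c : ZMod n}
    (hc : ∀ i ∈ s, IsUnit (a i - c)) : ∑ i ∈ s, ζ ^ (a i).val ≠ 0 := by
  intro h
  have hprim : ∀ z ∈ primitiveRoots n K, IsPrimitiveRoot z n :=
    fun z hz => (mem_primitiveRoots (NeZero.pos n)).mp hz
  have hconj : ∀ z ∈ primitiveRoots n K, ∑ i ∈ s, z ^ (a i).val = 0 := fun z hz =>
    hζ.sum_pow_eq_zero_of_sum_pow_eq_zero (NeZero.pos n) (hprim z hz) h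
  have key : (#s : K) * ArithmeticFunction.moebius n = 0 := calc
    (#s : K) * ArithmeticFunction.moebius n
        = ∑ i ∈ s, ∑ z ∈ primitiveRoots n K, z ^ (a i - c).val := by
      rw [← hζ.sum_primitiveRoots_eq_moebius (NeZero.ne n), ← nsmul_eq_mul, ← sum_const]
      exact sum_congr rfl fun i hi => (sum_primitiveRoots_pow_val_of_isUnit (hc i hi)).symm
    _ = ∑ z ∈ primitiveRoots n K, z ^ (-c).val * ∑ i ∈ s, z ^ (a i).val := by
      rw [sum_comm]
      refine sum_congr rfl fun z hz => ?_
      rw [mul_sum]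
      refine sum_congr rfl fun i _ => ?_
      rw [sub_eq_neg_add, pow_val_add_of_pow_eq_one (hprim z hz).pow_eq_one]
    _ = 0 := sum_eq_zero fun z hz => by rw [hconj z hz, mul_zero]
  simp [hs.ne_empty, ArithmeticFunction.moebius_ne_zero_iff_squarefree.mpr hn] at key

end CharZero

end IsPrimitiveRoot

theorem ZMod.exists_forall_isUnit_sq_sub {m : ℕ} (hodd : Odd m) (hsf : Squarefree m) :
    ∃ t : ZMod m, ∀ x, IsUnit (x ^ 2 - t) := by
  induction m using Nat.recOnPosPrimePosCoprime with
  | zero => exact absurd hsf not_squarefree_zero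
  | one => exact ⟨0, fun _ => isUnit_of_subsingleton _⟩
  | prime_pow p k hp hk =>
    obtain rfl : k = 1 := by
      have := hsf.eq_zero_or_one_of_pow_of_not_isUnit (Nat.isUnit_iff.not.mpr hp.ne_one)
      omega
    have : Fact p.Prime := ⟨hp⟩
    obtain ⟨t, ht⟩ := FiniteField.exists_nonsquare (F := ZMod p) (by
      rw [ZMod.ringChar_zmod_n]; rintro rfl; exact Nat.not_odd_iff_even.mpr even_two hodd)
    rw [pow_one]
    refine ⟨t, fun x => isUnit_iff_ne_zero.mpr <| sub_ne_zero.mpr fun hx => ht ⟨x, ?_⟩⟩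
    rw [← hx, sq]
  | coprime a b _ _ hab iha ihb =>
    obtain ⟨t₁, ht₁⟩ := iha (Nat.odd_mul.mp hodd).1 (Squarefree.of_mul_left hsf)
    obtain ⟨t₂, ht₂⟩ := ihb (Nat.odd_mul.mp hodd).2 (Squarefree.of_mul_right hsf)
    let e := ZMod.chineseRemainder hab
    refine ⟨e.symm (t₁, t₂), fun x => ?_⟩
    rw [← isUnit_map_iff e, map_sub, map_pow, e.apply_symm_apply, Prod.isUnit_iff]
    exact ⟨ht₁ (e x).1, ht₂ (e x).2⟩

theorem exists_forall_isUnit_sub_of_two_mul_eq {R : Type*} [CommRing R] (h2 : IsUnit (2 : R))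
    {t : R} (ht : ∀ x, IsUnit (x ^ 2 - t)) (b : R) :
    ∃ c, ∀ x y, 2 * y = x ^ 2 + b * x → IsUnit (y - c) := by
  have h8 : IsUnit (8 : R) := by simpa [show (8 : R) = 2 ^ 3 by norm_num] using h2.pow 3
  refine ⟨(h8.unit⁻¹ : Rˣ) * (t - b ^ 2), fun x y hxy => ?_⟩
  have hsq : 8 * (y - (h8.unit⁻¹ : Rˣ) * (t - b ^ 2)) = (2 * x + b) ^ 2 - t := by
    rw [mul_sub, ← mul_assoc, IsUnit.mul_val_inv, one_mul]
    linear_combination 4 * hxy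
  exact isUnit_of_mul_isUnit_right (hsq ▸ ht (2 * x + b))

theorem e_intCast_div_natCast (k : ℤ) (m : ℕ) [NeZero m] :
    e (k / m) = Complex.exp (2 * Real.pi * Complex.I / m) ^ (k : ZMod m).val := by
  set ζ := Complex.exp (2 * Real.pi * Complex.I / m)
  have hζ : ζ ^ m = 1 := (Complex.isPrimitiveRoot_exp m (NeZero.ne m)).pow_eq_one
  have hexp : e (k / m) = ζ ^ k := by
    rw [← Complex.exp_int_mul, e]
    congr 1
    push_cast
    field_simp
  conv_lhs => rw [hexp, ← Int.emod_add_mul_ediv k m, zpow_add₀ (Complex.exp_ne_zero _),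
    zpow_mul, zpow_natCast, hζ, one_zpow, mul_one]
  rw [← ZMod.val_intCast, zpow_natCast]

theorem Int.even_sq_add_mul_of_odd {b : ℤ} (hb : Odd b) (k : ℤ) : Even (k ^ 2 + b * k) := by
  simp [parity_simps, hb]

theorem stmt19_general (q : ℕ) (heven : Even q) (hsf : Squarefree q) (α : ℤ)
    (K : ℕ) :
    ∑ k ∈ Finset.range (K + 1),
      e ((((k : ℤ) ^ 2 + (4 * α + 1) * k : ℤ) : ℝ) / q) ≠ 0 := by
  obtain ⟨m, rfl⟩ := heven
  rw [← two_mul] at hsf ⊢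
  obtain ⟨hcop, -, hsfm⟩ := Nat.squarefree_mul_iff.mp hsf
  have : NeZero m := ⟨hsfm.ne_zero⟩
  set g : ℕ → ℤ := fun k => ((k : ℤ) ^ 2 + (4 * α + 1) * k) / 2
  have hg (k : ℕ) : 2 * g k = (k : ℤ) ^ 2 + (4 * α + 1) * k :=
    Int.two_mul_ediv_two_of_even (Int.even_sq_add_mul_of_odd ⟨2 * α, by ring⟩ k)
  have hterm (k : ℕ) : e ((((k : ℤ) ^ 2 + (4 * α + 1) * k : ℤ) : ℝ) / (2 * m : ℕ)) =
      Complex.exp (2 * Real.pi * Complex.I / m) ^ (g k : ZMod m).val := by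
    rw [← hg k, ← e_intCast_div_natCast]
    congr 1
    push_cast
    field_simp
  obtain ⟨t, ht⟩ := ZMod.exists_forall_isUnit_sq_sub (Nat.coprime_two_left.mp hcop) hsfm
  obtain ⟨c, hc⟩ := exists_forall_isUnit_sub_of_two_mul_eq
    (by exact_mod_cast (ZMod.isUnit_iff_coprime 2 m).mpr hcop) ht ((4 * α + 1 : ℤ) : ZMod m)
  rw [sum_congr rfl fun k _ => hterm k]
  exact (Complex.isPrimitiveRoot_exp m (NeZero.ne m)).sum_pow_val_ne_zero hsfm
    nonempty_range_add_one fun k _ =>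
      hc k _ (by exact_mod_cast congrArg (Int.cast : ℤ → ZMod m) (hg k))

theorem stmt19 (q : ℕ) (hq : 0 < q) (heven : Even q) (hsf : Squarefree q) (α : ℤ)
    (K : ℕ) (hK : K < q) :
    ∑ k ∈ Finset.range (K + 1),
      e ((((k : ℤ) ^ 2 + (4 * α + 1) * k : ℤ) : ℝ) / q) ≠ 0 :=
  stmt19_general q heven hsf α K
end
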